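/- Let V : ℝ → ℝ be even, non-negative, non-increasing on (0,∞), integrable with finite first moment; set a := ∫₀^∞ V, ρ̃*(x) := max(1/√a − x/(2aγ), 0), g(x) := (1/√a) ∫_x^∞ V(y) dy, and h_γ(x) := (1/(2aγ)) ∫₀^∞ [V(y + 2γ√a − x) − V(y + x)] y dy. For a non-negative measure μ̃ on [0,∞) define Ẽ_γ(μ̃) := (1/2)∫₀^∞∫₀^∞ V(x−y) dμ̃(x) dμ̃(y) + (1/γ)∫₀^∞ x dμ̃(x). Then for every finite signed Borel measure ν on [0,∞) with ν([0,∞)) = 0, |ν|([0,∞)) ≤ 2γ, and ν + ρ̃* dx ≥ 0, one has Ẽ_γ(ρ̃* dx + ν) − Ẽ_γ(ρ̃* dx) = (1/2)∫₀^∞∫₀^∞ V(x−y) dν(x) dν(y) − ∫₀^∞ g dν + ∫₀^∞ h_γ dν. -/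

import Mathlib

/-!
The density ρ̃* satisfies the Euler–Lagrange equation of Ẽ_γ up to the boundary term h_γ: its
potential φ(x) = ∫ V(x − y) ρ̃*(y) dy satisfies φ + x/γ + g − h_γ = 2√a on all of ℝ. Expanding
the quadratic energy around ρ̃* dx, the terms linear in ν therefore integrate the constant 2√a
against ν, which has total mass zero.

The pointwise identity comes from the tail moments M(t) = ∫_t^∞ (u − t) V(u) du. Since ρ̃* is
affine on its support [0, L], L = 2γ√a, one gets φ(x) = (M(x − L) − M(x))/(2aγ) − g(x) and
h_γ(x) = (M(L − x) − M(x))/(2aγ), and evenness of V gives M(−t) = M(t) + 2at.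
-/
open MeasureTheory Set Filter
open scoped ENNReal Topology

noncomputable section

/-- The rescaled bulk profile `ρ̃*(x) = (1/√a − x/(2aγ))⁺`. -/
def rhoTilde (a γ x : ℝ) : ℝ := max (1 / Real.sqrt a - x / (2 * a * γ)) 0

/-- The measure `ρ̃* dx` on `[0,∞)`. -/
def lamMeas (a γ : ℝ) : Measure ℝ :=
  (volume.restrict (Ici (0 : ℝ))).withDensity fun x => ENNReal.ofReal (rhoTilde a γ x)

/-- `g(x) = (1/√a) ∫_x^∞ V(y) dy`. -/
def gFun (V : ℝ → ℝ) (a x : ℝ) : ℝ := (1 / Real.sqrt a) * ∫ y in Ioi x, V y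

/-- The auxiliary boundary function `h_γ`. -/
def hGam (V : ℝ → ℝ) (a γ x : ℝ) : ℝ :=
  (1 / (2 * a * γ)) *
    ∫ y in Ioi (0 : ℝ), (V (y + 2 * γ * Real.sqrt a - x) - V (y + x)) * y

/-- The blown-up continuum energy
`Ẽ_γ(μt) = (1/2) ∬ V(x−y) dμt dμt + (1/γ) ∫ x dμt`. -/
def Etilde (V : ℝ → ℝ) (γ : ℝ) (μ : Measure ℝ) : ℝ :=
  (1 / 2) * (∫ x, (∫ y, V (x - y) ∂μ) ∂μ) + (1 / γ) * ∫ x, x ∂μ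

section Tails

variable {f : ℝ → ℝ}

theorem MeasureTheory.Integrable.mul_of_abs_mul (h : Integrable fun x => |x| * f x)
    (hf : AEStronglyMeasurable f) : Integrable fun x => x * f x :=
  h.mono (aestronglyMeasurable_id.mul hf) (ae_of_all _ fun x => by simp)

theorem indicator_Ioi_comp_add_right (f : ℝ → ℝ) (t : ℝ) :
    (Ioi 0).indicator (fun y => f (y + t)) = fun y => (Ioi t).indicator f (y + t) := by
  ext y
  simp only [indicator, mem_Ioi, lt_add_iff_pos_left]

theorem integral_Ioi_comp_add_right (f : ℝ → ℝ) (t : ℝ) :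
    ∫ y in Ioi 0, f (y + t) = ∫ u in Ioi t, f u := by
  rw [← integral_indicator measurableSet_Ioi, ← integral_indicator measurableSet_Ioi,
    indicator_Ioi_comp_add_right, integral_add_right_eq_self (fun u => (Ioi t).indicator f u)]

theorem MeasureTheory.IntegrableOn.comp_add_right_Ioi {t : ℝ} (hf : IntegrableOn f (Ioi t)) :
    IntegrableOn (fun y => f (y + t)) (Ioi 0) := by
  rw [← integrable_indicator_iff measurableSet_Ioi, indicator_Ioi_comp_add_right]
  exact ((integrable_indicator_iff measurableSet_Ioi).2 hf).comp_add_right t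

theorem continuous_integral_Ioi (hf : Integrable f) : Continuous fun x => ∫ y in Ioi x, f y := by
  have h : (fun x => ∫ y in Ioi x, f y) = fun x => (∫ y in Ioi 0, f y) - ∫ y in 0..x, f y := by
    ext x
    rw [← intervalIntegral.integral_Ioi_sub_Ioi' hf.integrableOn hf.integrableOn, sub_sub_cancel]
  rw [h]
  exact continuous_const.sub (intervalIntegral.continuous_primitive
    (fun _ _ => hf.intervalIntegrable) 0)

theorem abs_integral_Ioi_le (hf : Integrable f) (x : ℝ) : |∫ y in Ioi x, f y| ≤ ∫ y, |f y| :=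
  (abs_integral_le_integral_abs).trans
    (setIntegral_le_integral hf.abs (ae_of_all _ fun y => abs_nonneg (f y)))

end Tails

def tailMoment (f : ℝ → ℝ) (t : ℝ) : ℝ := ∫ u in Ioi t, (u - t) * f u

section TailMoment

variable {f : ℝ → ℝ}

theorem integral_Ioi_comp_add_right_mul (f : ℝ → ℝ) (t : ℝ) :
    ∫ y in Ioi 0, f (y + t) * y = tailMoment f t := by
  rw [tailMoment, ← integral_Ioi_comp_add_right (fun u => (u - t) * f u) t]
  simp only [add_sub_cancel_right, mul_comm]

theorem MeasureTheory.Integrable.sub_mul_of_mul (hf : Integrable f)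
    (hmom : Integrable fun x => x * f x) (t : ℝ) : Integrable fun u => (u - t) * f u :=
  (hmom.sub (hf.const_mul t)).congr (ae_of_all _ fun u => by simp only [Pi.sub_apply]; ring)

theorem integrableOn_Ioi_comp_add_right_mul (hf : Integrable f)
    (hmom : Integrable fun x => x * f x) (t : ℝ) :
    IntegrableOn (fun y => f (y + t) * y) (Ioi 0) :=
  ((hf.sub_mul_of_mul hmom t).integrableOn.comp_add_right_Ioi).congr_fun
    (fun y _ => by ring) measurableSet_Ioi

theorem integral_mul_eq_zero_of_even (heven : ∀ x, f (-x) = f x) :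
    ∫ x, x * f x = 0 := by
  have h := integral_neg_eq_self (fun x => x * f x) volume
  simp only [heven, neg_mul, integral_neg] at h
  linarith

theorem tailMoment_neg (heven : ∀ x, f (-x) = f x) (hf : Integrable f)
    (hmom : Integrable fun x => x * f x) (t : ℝ) :
    tailMoment f (-t) = tailMoment f t + t * ∫ u, f u := by
  have hint := hf.sub_mul_of_mul hmom t
  have hleft : ∫ u in Iic t, (u - t) * f u = -tailMoment f (-t) := by
    rw [tailMoment, ← integral_comp_neg_Iic t (fun u => (u - -t) * f u), ← integral_neg]
    refine setIntegral_congr_fun measurableSet_Iic fun u _ => ?_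
    simp only [heven]
    ring
  have htotal : ∫ u, (u - t) * f u = -t * ∫ u, f u := by
    simp only [sub_mul]
    rw [integral_sub hmom (hf.const_mul t), integral_mul_eq_zero_of_even heven,
      integral_const_mul]
    ring
  have hsplit := intervalIntegral.integral_Iic_add_Ioi (b := t) hint.integrableOn hint.integrableOn
  rw [hleft, htotal] at hsplit
  unfold tailMoment at hsplit ⊢
  linarith

theorem integral_sub_mul_comp_sub (hf : Integrable f) (hmom : Integrable fun x => x * f x)
    (x L : ℝ) :
    ∫ y in 0..L, (L - y) * f (x - y)
      = tailMoment f (x - L) - tailMoment f x - L * ∫ u in Ioi x, f u := by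
  have hint := hf.sub_mul_of_mul hmom (x - L)
  have htail : ∫ u in Ioi x, (u - (x - L)) * f u = tailMoment f x + L * ∫ u in Ioi x, f u := by
    rw [tailMoment, ← integral_const_mul,
      ← integral_add (hf.sub_mul_of_mul hmom x).integrableOn (hf.const_mul L).integrableOn]
    exact setIntegral_congr_fun measurableSet_Ioi fun u _ => by ring
  calc ∫ y in 0..L, (L - y) * f (x - y)
      = ∫ y in 0..L, (fun u => (u - (x - L)) * f u) (x - y) :=
        intervalIntegral.integral_congr fun y _ => by simp only; ring
    _ = ∫ u in x - L..x, (u - (x - L)) * f u := by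
        rw [intervalIntegral.integral_comp_sub_left (fun u => (u - (x - L)) * f u) x, sub_zero]
    _ = tailMoment f (x - L) - ∫ u in Ioi x, (u - (x - L)) * f u :=
        (intervalIntegral.integral_Ioi_sub_Ioi' hint.integrableOn hint.integrableOn).symm
    _ = _ := by rw [htail]; ring

end TailMoment

theorem integral_eq_two_mul_integral_Ioi_of_even {f : ℝ → ℝ} (heven : ∀ x, f (-x) = f x) :
    ∫ x, f x = 2 * ∫ x in Ioi 0, f x := by
  rw [← integral_comp_abs]
  refine integral_congr_ae (ae_of_all _ fun x => ?_)
  rcases abs_choice x with h | h <;> simp only [h, heven]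

section Profile

variable {a γ : ℝ}

theorem continuous_rhoTilde : Continuous (rhoTilde a γ) := by
  unfold rhoTilde
  fun_prop

theorem rhoTilde_eq (ha : 0 < a) (hγ : 0 < γ) (y : ℝ) :
    rhoTilde a γ y = max ((2 * γ * √a - y) / (2 * a * γ)) 0 := by
  have hsa : √a * √a = a := Real.mul_self_sqrt ha.le
  rw [rhoTilde]
  congr 1
  field_simp
  nlinarith

theorem rhoTilde_eq_zero_of_le (ha : 0 < a) (hγ : 0 < γ) {y : ℝ} (hy : 2 * γ * √a ≤ y) :
    rhoTilde a γ y = 0 := by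
  rw [rhoTilde_eq ha hγ]
  exact max_eq_right (div_nonpos_of_nonpos_of_nonneg (by linarith) (by positivity))

-- `1 / √0` and `x / 0` are `0` in Lean, so the profile vanishes identically.
theorem lamMeas_zero_left : lamMeas 0 γ = 0 := by
  simp [lamMeas, rhoTilde]

theorem ae_mem_Icc_lamMeas (ha : 0 < a) (hγ : 0 < γ) :
    ∀ᵐ x ∂lamMeas a γ, x ∈ Icc 0 (2 * γ * √a) := by
  rw [lamMeas, ae_withDensity_iff continuous_rhoTilde.measurable.ennreal_ofReal,
    ae_restrict_iff' measurableSet_Ici]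
  refine ae_of_all _ fun x (hx : 0 ≤ x) hρ => ⟨hx, not_lt.1 fun hL => hρ ?_⟩
  rw [rhoTilde_eq_zero_of_le ha hγ hL.le, ENNReal.ofReal_zero]

theorem integrable_id_lamMeas [IsFiniteMeasure (lamMeas a γ)] (ha : 0 < a) (hγ : 0 < γ) :
    Integrable (fun x => x) (lamMeas a γ) := by
  refine Integrable.mono' (integrable_const (2 * γ * √a)) aestronglyMeasurable_id ?_
  filter_upwards [ae_mem_Icc_lamMeas ha hγ] with x hx
  rw [Real.norm_eq_abs, abs_of_nonneg hx.1]
  exact hx.2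

theorem integral_lamMeas (ha : 0 < a) (hγ : 0 < γ) (f : ℝ → ℝ) :
    ∫ y, f y ∂lamMeas a γ
      = (1 / (2 * a * γ)) * ∫ y in 0..2 * γ * √a, (2 * γ * √a - y) * f y := by
  have hL : 0 ≤ 2 * γ * √a := by positivity
  rw [lamMeas, integral_withDensity_eq_integral_toReal_smul
      continuous_rhoTilde.measurable.ennreal_ofReal (ae_of_all _ fun _ => ENNReal.ofReal_lt_top),
    intervalIntegral.integral_of_le hL, ← integral_Icc_eq_integral_Ioc, ← integral_const_mul,
    setIntegral_eq_of_subset_of_forall_sdiff_eq_zero measurableSet_Ici Icc_subset_Ici_self]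
  · refine setIntegral_congr_fun measurableSet_Icc fun y hy => ?_
    rw [rhoTilde_eq ha hγ, ENNReal.toReal_ofReal (le_max_right _ _),
      max_eq_left (div_nonneg (by linarith [hy.2]) (by positivity)), smul_eq_mul]
    ring
  · intro y hy
    have hLy : 2 * γ * √a ≤ y := not_lt.1 fun h => hy.2 ⟨hy.1, h.le⟩
    rw [rhoTilde_eq_zero_of_le ha hγ hLy, ENNReal.ofReal_zero, ENNReal.toReal_zero, zero_smul]

end Profile

theorem euler_lagrange_lamMeas {V : ℝ → ℝ} (hVeven : ∀ x, V (-x) = V x) (hVint : Integrable V)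
    (hVmom : Integrable fun x => x * V x) {a γ : ℝ} (ha : a = ∫ x in Ioi (0 : ℝ), V x)
    (hapos : 0 < a) (hγ : 0 < γ) (x : ℝ) :
    (∫ y, V (x - y) ∂lamMeas a γ) + x / γ + gFun V a x - hGam V a γ x = 2 * √a := by
  set L := 2 * γ * √a with hL
  have hsa : √a * √a = a := Real.mul_self_sqrt hapos.le
  have hpotential : ∫ y, V (x - y) ∂lamMeas a γ
      = (1 / (2 * a * γ)) * (tailMoment V (x - L) - tailMoment V x
          - L * ∫ u in Ioi x, V u) := by
    rw [integral_lamMeas hapos hγ, integral_sub_mul_comp_sub hVint hVmom]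
  have hboundary :
      hGam V a γ x = (1 / (2 * a * γ)) * (tailMoment V (L - x) - tailMoment V x) := by
    rw [hGam, ← integral_Ioi_comp_add_right_mul, ← integral_Ioi_comp_add_right_mul,
      ← integral_sub (integrableOn_Ioi_comp_add_right_mul hVint hVmom _)
        (integrableOn_Ioi_comp_add_right_mul hVint hVmom _)]
    congr 1
    refine setIntegral_congr_fun measurableSet_Ioi fun y _ => ?_
    simp only [hL, add_sub_assoc]
    ring
  have hreflect : tailMoment V (x - L) = tailMoment V (L - x) + (L - x) * (2 * a) := by
    rw [← neg_sub, tailMoment_neg hVeven hVint hVmom,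
      integral_eq_two_mul_integral_Ioi_of_even hVeven, ← ha]
  rw [hpotential, hboundary, hreflect, gFun, hL]
  field_simp
  linear_combination (-2 * γ * ∫ u in Ioi x, V u) * hsa

theorem integrable_gFun {V : ℝ → ℝ} (hVint : Integrable V) (a : ℝ) (μ : Measure ℝ)
    [IsFiniteMeasure μ] : Integrable (gFun V a) μ := by
  refine Integrable.of_bound ((continuous_integral_Ioi hVint).const_mul _).aestronglyMeasurable
    (|1 / √a| * ∫ y, |V y|) (ae_of_all _ fun x => ?_)
  rw [gFun, Real.norm_eq_abs, abs_mul]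
  exact mul_le_mul_of_nonneg_left (abs_integral_Ioi_le hVint x) (abs_nonneg _)

theorem integral_add_add_sub_of_forall_eq {α : Type*} [MeasurableSpace α] {μ : Measure α}
    [IsFiniteMeasure μ] {f₁ f₂ f₃ f₄ : α → ℝ} {c : ℝ} (h₁ : Integrable f₁ μ)
    (h₂ : Integrable f₂ μ) (h₃ : Integrable f₃ μ) (h₄ : Integrable f₄ μ)
    (h : ∀ x, f₁ x + f₂ x + f₃ x - f₄ x = c) :
    (∫ x, f₁ x ∂μ) + (∫ x, f₂ x ∂μ) + (∫ x, f₃ x ∂μ) - (∫ x, f₄ x ∂μ) = μ.real univ * c := by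
  calc (∫ x, f₁ x ∂μ) + (∫ x, f₂ x ∂μ) + (∫ x, f₃ x ∂μ) - (∫ x, f₄ x ∂μ)
      = ∫ x, (f₁ x + f₂ x + f₃ x - f₄ x) ∂μ := by
        rw [integral_sub (f := fun x => f₁ x + f₂ x + f₃ x) ((h₁.add h₂).add h₃) h₄,
          integral_add (f := fun x => f₁ x + f₂ x) (h₁.add h₂) h₃, integral_add h₁ h₂]
    _ = μ.real univ * c := by simp [h]

/-- The signed measure `ν` is represented through the finite measure `μt = ρ̃* dx + ν`, and all
integrals against `ν` are expanded by linearity. -/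
theorem stmt6_general (V : ℝ → ℝ) (hVeven : ∀ x, V (-x) = V x) (hVnonneg : ∀ x, 0 ≤ V x)
    (hVint : Integrable V)
    (hVmom : Integrable (fun x => |x| * V x)) (a : ℝ)
    (ha : a = ∫ x in Ioi (0 : ℝ), V x) :
    ∀ γ : ℝ, 0 < γ →
    ∀ (μt : Measure ℝ) [IsFiniteMeasure μt],
      -- ν := μt − ρ̃* dx is supported in [0,∞)
      μt (Iio (0 : ℝ)) = 0 →
      -- ν([0,∞)) = 0
      μt Set.univ = lamMeas a γ Set.univ →
      -- |ν|([0,∞)) ≤ 2γ  (equivalently, ν(s) ≤ γ for every Borel s, since ν(univ) = 0)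
      (∀ s : Set ℝ, MeasurableSet s → μt s ≤ lamMeas a γ s + ENNReal.ofReal γ) →
      -- integrability side conditions, implicit in the statement of the identity
      Integrable (fun p : ℝ × ℝ => V (p.1 - p.2)) (μt.prod μt) →
      Integrable (fun p : ℝ × ℝ => V (p.1 - p.2)) (μt.prod (lamMeas a γ)) →
      Integrable (fun p : ℝ × ℝ => V (p.1 - p.2)) ((lamMeas a γ).prod (lamMeas a γ)) →
      Integrable (fun x : ℝ => x) μt →
      Integrable (hGam V a γ) μt →
      -- the identity: Ẽ_γ(ρ̃* dx + ν) − Ẽ_γ(ρ̃* dx)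
      --   = (1/2) ∬ V(x−y) dν dν − ∫ g dν + ∫ h_γ dν
      Etilde V γ μt - Etilde V γ (lamMeas a γ) =
        (1 / 2) * ((∫ x, (∫ y, V (x - y) ∂μt) ∂μt)
            - 2 * (∫ x, (∫ y, V (x - y) ∂(lamMeas a γ)) ∂μt)
            + ∫ x, (∫ y, V (x - y) ∂(lamMeas a γ)) ∂(lamMeas a γ))
          - ((∫ x, gFun V a x ∂μt) - ∫ x, gFun V a x ∂(lamMeas a γ))
          + ((∫ x, hGam V a γ x ∂μt) - ∫ x, hGam V a γ x ∂(lamMeas a γ)) := by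
  intro γ hγ μt _ _ hmass _ _ hVμlam hVlamlam hxμ hhμ
  have ha0 : 0 ≤ a := ha ▸ setIntegral_nonneg measurableSet_Ioi fun y _ => hVnonneg y
  obtain rfl | hapos := ha0.eq_or_lt
  · have hμt : μt = 0 := Measure.measure_univ_eq_zero.mp (by simp [hmass, lamMeas_zero_left])
    simp [Etilde, hμt, lamMeas_zero_left]
  have : IsFiniteMeasure (lamMeas a γ) := ⟨hmass ▸ measure_lt_top μt univ⟩
  have hEL := euler_lagrange_lamMeas hVeven hVint
    (hVmom.mul_of_abs_mul hVint.aestronglyMeasurable) ha hapos hγ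
  have hφlam := hVlamlam.integral_prod_left
  have hxlam := integrable_id_lamMeas hapos hγ
  have hhlam : Integrable (hGam V a γ) (lamMeas a γ) :=
    (((hφlam.add (hxlam.div_const γ)).add (integrable_gFun hVint a _)).sub
      (integrable_const (2 * √a))).congr (ae_of_all _ fun x => by
        simp only [Pi.add_apply, Pi.sub_apply]; linarith [hEL x])
  have hμ := integral_add_add_sub_of_forall_eq hVμlam.integral_prod_left (hxμ.div_const γ)
    (integrable_gFun hVint a μt) hhμ hEL
  have hlam := integral_add_add_sub_of_forall_eq hφlam (hxlam.div_const γ)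
    (integrable_gFun hVint a _) hhlam hEL
  rw [integral_div, measureReal_def, hmass] at hμ
  rw [integral_div, measureReal_def] at hlam
  simp only [Etilde, one_div_mul_eq_div]
  linarith

/-- identity for the blown-up energy difference.  The signed measure
`ν` is represented through the non-negative finite measure `μt = ρ̃* dx + ν`; the
conditions `ν([0,∞)) = 0`, `|ν|([0,∞)) ≤ 2γ` and `ν + ρ̃* dx ≥ 0` translate into
the hypotheses below, and all integrals against `ν` are expanded by linearity. -/
theorem stmt6 (V : ℝ → ℝ) (hVeven : ∀ x, V (-x) = V x) (hVnonneg : ∀ x, 0 ≤ V x)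
    (hVmono : AntitoneOn V (Ioi (0 : ℝ))) (hVint : Integrable V)
    (hVmom : Integrable (fun x => |x| * V x)) (a : ℝ)
    (ha : a = ∫ x in Ioi (0 : ℝ), V x) :
    ∀ γ : ℝ, 0 < γ →
    ∀ (μt : Measure ℝ) [IsFiniteMeasure μt],
      -- ν := μt − ρ̃* dx is supported in [0,∞)
      μt (Iio (0 : ℝ)) = 0 →
      -- ν([0,∞)) = 0
      μt Set.univ = lamMeas a γ Set.univ →
      -- |ν|([0,∞)) ≤ 2γ  (equivalently, ν(s) ≤ γ for every Borel s, since ν(univ) = 0)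
      (∀ s : Set ℝ, MeasurableSet s → μt s ≤ lamMeas a γ s + ENNReal.ofReal γ) →
      -- integrability side conditions, implicit in the statement of the identity
      Integrable (fun p : ℝ × ℝ => V (p.1 - p.2)) (μt.prod μt) →
      Integrable (fun p : ℝ × ℝ => V (p.1 - p.2)) (μt.prod (lamMeas a γ)) →
      Integrable (fun p : ℝ × ℝ => V (p.1 - p.2)) ((lamMeas a γ).prod (lamMeas a γ)) →
      Integrable (fun x : ℝ => x) μt →
      Integrable (hGam V a γ) μt →
      -- the identity: Ẽ_γ(ρ̃* dx + ν) − Ẽ_γ(ρ̃* dx)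
      --   = (1/2) ∬ V(x−y) dν dν − ∫ g dν + ∫ h_γ dν
      Etilde V γ μt - Etilde V γ (lamMeas a γ) =
        (1 / 2) * ((∫ x, (∫ y, V (x - y) ∂μt) ∂μt)
            - 2 * (∫ x, (∫ y, V (x - y) ∂(lamMeas a γ)) ∂μt)
            + ∫ x, (∫ y, V (x - y) ∂(lamMeas a γ)) ∂(lamMeas a γ))
          - ((∫ x, gFun V a x ∂μt) - ∫ x, gFun V a x ∂(lamMeas a γ))
          + ((∫ x, hGam V a γ x ∂μt) - ∫ x, hGam V a γ x ∂(lamMeas a γ)) :=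
  stmt6_general V hVeven hVnonneg hVint hVmom a ha

end
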